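/- Let l ≥ 1 be an integer not divisible by 8. Write the l-th iterate of g as g^l(x,y) = (X_l(x,y), Y_l(x,y)) with X_l, Y_l ∈ ℤ[x,y], and let X̄_l, Ȳ_l ∈ 𝔽₃[x,y] denote their reductions modulo 3. Then the 𝔽₃-algebra 𝔽₃[x,y]/(X̄_l − x, Ȳ_l − y) is étale over 𝔽₃ (formally étale and of finite presentation). -/

import Mathlib

open MvPolynomial

/-- The coordinate polynomials (over `ℤ`) of the Hénon map `g(x,y) = (y, x + y - y³)`. -/
noncomputable def gPoly : Fin 2 → MvPolynomial (Fin 2) ℤ :=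
  ![X 1, X 0 + X 1 - (X 1) ^ 3]

/-- Coordinate polynomials of the `l`-th iterate `g^l(x,y) = (X_l(x,y), Y_l(x,y))`. -/
noncomputable def gPolyIter : ℕ → Fin 2 → MvPolynomial (Fin 2) ℤ
  | 0 => fun i => X i
  | n + 1 => fun i => bind₁ gPoly (gPolyIter n i)

/-- Reduction modulo 3 of integral polynomials. -/
noncomputable def red3 : MvPolynomial (Fin 2) ℤ →+* MvPolynomial (Fin 2) (ZMod 3) :=
  MvPolynomial.map (Int.castRingHom (ZMod 3))

/-!
Modulo 3 the derivative of `y³` vanishes, so the Jacobian matrix of `g` is the constant matrix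
`A = [[0, 1], [1, 1]]` and that of `g^l` is `A^l`. The relations `X̄_l - x`, `Ȳ_l - y` thus have
the constant Jacobian determinant `det (A^l - 1)`, which is nonzero since the eigenvalues of `A`
are primitive 8th roots of unity in `𝔽₉`. A quotient of a polynomial ring by as many relations as
variables whose Jacobian determinant is a unit is standard smooth of relative dimension `0`,
i.e. étale.
-/

theorem etale_quotient_of_isUnit_det_pderiv {R σ : Type*} [CommRing R] [Fintype σ]
    [DecidableEq σ] (v : σ → MvPolynomial σ R)
    (h : IsUnit (Ideal.Quotient.mk (Ideal.span (Set.range v))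
      (Matrix.of fun i j => pderiv i (v j)).det)) :
    Algebra.Etale R (MvPolynomial σ R ⧸ Ideal.span (Set.range v)) := by
  let P₀ := Algebra.PreSubmersivePresentation.naive (v := v) id Function.injective_id
  have hjacobiMatrix : P₀.jacobiMatrix = Matrix.of fun i j => pderiv i (v j) := by
    ext i j
    simp [P₀]
  have hjacobian := P₀.jacobian_eq_jacobiMatrix_det
  rw [hjacobiMatrix] at hjacobian
  let P : Algebra.SubmersivePresentation R _ σ σ := ⟨P₀, hjacobian ▸ h⟩
  have : Algebra.IsStandardSmoothOfRelativeDimension 0 R _ :=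
    P.isStandardSmoothOfRelativeDimension (by simp [Algebra.Presentation.dimension])
  infer_instance

lemma pderiv_add_sub_pow_three {R σ : Type*} [CommRing R] [CharP R 3] (i : σ)
    (p q : MvPolynomial σ R) : pderiv i (p + q - q ^ 3) = pderiv i p + pderiv i q := by
  have h3 : (3 : MvPolynomial σ R) = 0 := CharP.cast_eq_zero _ 3
  simp [h3]

lemma gPolyIter_succ_eq_bind₁ (n : ℕ) (i : Fin 2) :
    gPolyIter (n + 1) i = bind₁ (gPolyIter n) (gPoly i) := by
  induction n generalizing i with
  | zero => simp [gPolyIter]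
  | succ n ih =>
    simp only [gPolyIter] at ih ⊢
    rw [ih, bind₁_bind₁]

lemma gPolyIter_succ_zero (n : ℕ) : gPolyIter (n + 1) 0 = gPolyIter n 1 := by
  simp [gPolyIter_succ_eq_bind₁, gPoly]

lemma gPolyIter_succ_one (n : ℕ) :
    gPolyIter (n + 1) 1 = gPolyIter n 0 + gPolyIter n 1 - gPolyIter n 1 ^ 3 := by
  simp [gPolyIter_succ_eq_bind₁, gPoly]

def henonJacobianMod3 : Matrix (Fin 2) (Fin 2) (ZMod 3) := !![0, 1; 1, 1]

lemma pderiv_red3_gPolyIter (n : ℕ) (j k : Fin 2) :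
    pderiv k (red3 (gPolyIter n j)) = C ((henonJacobianMod3 ^ n) j k) := by
  induction n generalizing j with
  | zero => simp [gPolyIter, red3, Pi.single_apply, Matrix.one_apply]
  | succ n ih =>
    rw [pow_succ', Matrix.mul_apply, Fin.sum_univ_two]
    fin_cases j
    · simp [gPolyIter_succ_zero, ih, henonJacobianMod3]
    · simp [gPolyIter_succ_one, pderiv_add_sub_pow_three, ih, henonJacobianMod3]

lemma pderiv_red3_gPolyIter_sub_X (l : ℕ) :
    (Matrix.of fun i j : Fin 2 => pderiv i (red3 (gPolyIter l j) - X j)) =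
      (C : ZMod 3 →+* MvPolynomial (Fin 2) (ZMod 3)).mapMatrix
        (henonJacobianMod3 ^ l - 1).transpose := by
  ext i j : 1
  simp [pderiv_red3_gPolyIter, pderiv_X, Pi.single_apply, Matrix.one_apply, eq_comm,
    -Matrix.transpose_pow]

lemma det_henonJacobianMod3_pow_sub_one_ne_zero {l : ℕ} (h8 : ¬ 8 ∣ l) :
    (henonJacobianMod3 ^ l - 1).det ≠ 0 := by
  rw [pow_eq_pow_mod l (by decide : henonJacobianMod3 ^ 8 = 1)]
  have : 0 < l % 8 := Nat.pos_of_ne_zero fun h => h8 (Nat.dvd_of_mod_eq_zero h)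
  have : l % 8 < 8 := Nat.mod_lt _ (by norm_num)
  interval_cases l % 8 <;> decide

theorem stmt5_general (l : ℕ) (h8 : ¬ (8 ∣ l)) :
    Algebra.Etale (ZMod 3)
      (MvPolynomial (Fin 2) (ZMod 3) ⧸
        Ideal.span {red3 (gPolyIter l 0) - X 0, red3 (gPolyIter l 1) - X 1}) := by
  have hrange : Set.range (fun i : Fin 2 => red3 (gPolyIter l i) - X i) =
      {red3 (gPolyIter l 0) - X 0, red3 (gPolyIter l 1) - X 1} := by
    rw [← Matrix.range_cons_cons_empty _ _ ![]]
    congr 1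
    ext i
    fin_cases i <;> rfl
  rw [← hrange]
  apply etale_quotient_of_isUnit_det_pderiv
  rw [pderiv_red3_gPolyIter_sub_X, ← RingHom.map_det, Matrix.det_transpose]
  exact ((isUnit_iff_ne_zero.mpr (det_henonJacobianMod3_pow_sub_one_ne_zero h8)).map C).map _

/-- For `l ≥ 1` not divisible by `8`, the `𝔽₃`-algebra
`𝔽₃[x,y]/(X̄_l - x, Ȳ_l - y)` is étale over `𝔽₃`. -/
theorem stmt5 (l : ℕ) (hl : 1 ≤ l) (h8 : ¬ (8 ∣ l)) :
    Algebra.Etale (ZMod 3)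
      (MvPolynomial (Fin 2) (ZMod 3) ⧸
        Ideal.span {red3 (gPolyIter l 0) - X 0, red3 (gPolyIter l 1) - X 1}) :=
  stmt5_general l h8
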